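/- Let (X,d) be a metric space and let r_1,…,r_M ∈ X be prototypes with dissimilarity embedding ζ(g) = (d(g,r_1),…,d(g,r_M)) ∈ ℝ^M. Then for any points g_1,…,g_n ∈ X and any g₀ ∈ X, writing y_t := ζ(g_t) and ȳ := (1/n)·Σ_{t=1}^n y_t, one has: ‖ȳ − ζ(g₀)‖₂² + (1/n)·Σ_{t=1}^n ‖y_t − ȳ‖₂² ≤ (M/n)·Σ_{t=1}^n d(g_t,g₀)². -/

import Mathlib

open MeasureTheory Finset

/-- The dissimilarity embedding `ζ(g) = (d(g,r_1),…,d(g,r_M)) ∈ ℝ^M`. -/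
noncomputable def dissEmbed {X : Type*} [MetricSpace X] {M : ℕ} (r : Fin M → X) (g : X) :
    EuclideanSpace ℝ (Fin M) :=
  (WithLp.equiv 2 (Fin M → ℝ)).symm fun i => dist g (r i)

/-!
Each coordinate `x ↦ d(x, rᵢ)` of the embedding is 1-Lipschitz by the reverse triangle
inequality, so `‖ζ(x) - ζ(x')‖² ≤ M d(x, x')²`. Averaging this over `x = g_t, x' = g₀` bounds
`(1/n) Σ_t ‖y_t - ζ(g₀)‖²`, which the bias–variance (König–Huygens) decomposition splits exactly
into `‖ȳ - ζ(g₀)‖² + (1/n) Σ_t ‖y_t - ȳ‖²`.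
-/

open RealInnerProductSpace

noncomputable def sampleMean {ι E : Type*} [Fintype ι] [AddCommGroup E] [Module ℝ E]
    (y : ι → E) : E :=
  (Fintype.card ι : ℝ)⁻¹ • ∑ t, y t

section SampleMean

variable {ι E : Type*} [Fintype ι]

theorem sum_sub_sampleMean [AddCommGroup E] [Module ℝ E] (y : ι → E) :
    ∑ t, (y t - sampleMean y) = 0 := by
  rcases isEmpty_or_nonempty ι with _ | _
  · simp
  · rw [sum_sub_distrib, sum_const, card_univ, ← Nat.cast_smul_eq_nsmul ℝ, sampleMean,
      smul_inv_smul₀ (by positivity), sub_self]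

theorem sum_norm_sub_sq_eq_sum_norm_sub_sampleMean_sq_add [NormedAddCommGroup E]
    [InnerProductSpace ℝ E] (y : ι → E) (z : E) :
    ∑ t, ‖y t - z‖ ^ 2 =
      ∑ t, ‖y t - sampleMean y‖ ^ 2 + Fintype.card ι * ‖sampleMean y - z‖ ^ 2 := by
  set m := sampleMean y
  have hcross : ∑ t, ⟪y t - m, m - z⟫ = 0 := by
    rw [← sum_inner, sum_sub_sampleMean, inner_zero_left]
  calc ∑ t, ‖y t - z‖ ^ 2
      = ∑ t, (‖y t - m‖ ^ 2 + 2 * ⟪y t - m, m - z⟫ + ‖m - z‖ ^ 2) := by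
        congr! 1 with t
        rw [← norm_add_sq_real, sub_add_sub_cancel]
    _ = ∑ t, ‖y t - m‖ ^ 2 + Fintype.card ι * ‖m - z‖ ^ 2 := by
        rw [sum_add_distrib, sum_add_distrib, ← mul_sum, hcross, sum_const, card_univ,
          nsmul_eq_mul]
        ring

end SampleMean

theorem EuclideanSpace.norm_sq_le_card_mul_sq {ι : Type*} [Fintype ι]
    {v : EuclideanSpace ℝ ι} {c : ℝ} (h : ∀ i, |v i| ≤ c) :
    ‖v‖ ^ 2 ≤ Fintype.card ι * c ^ 2 := by
  rw [EuclideanSpace.norm_sq_eq, ← nsmul_eq_mul, ← card_univ, ← sum_const]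
  gcongr with i
  exact h i

theorem norm_dissEmbed_sub_sq_le {X : Type*} [MetricSpace X] {M : ℕ} (r : Fin M → X)
    (x x' : X) : ‖dissEmbed r x - dissEmbed r x'‖ ^ 2 ≤ M * dist x x' ^ 2 := by
  simpa using EuclideanSpace.norm_sq_le_card_mul_sq
    (v := dissEmbed r x - dissEmbed r x') fun i => abs_dist_sub_le x x' (r i)

/-- deterministic sample analogue of Lemma 1:
`‖ȳ − ζ(g₀)‖₂² + (1/n)·Σ_t ‖y_t − ȳ‖₂² ≤ (M/n)·Σ_t d(g_t,g₀)²`. -/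
theorem sample_embedding_mean_bound
    {X : Type*} [MetricSpace X] {M : ℕ} (r : Fin M → X)
    {n : ℕ} (hn : 0 < n) (g : Fin n → X) (g₀ : X)
    (y : Fin n → EuclideanSpace ℝ (Fin M)) (hy : ∀ t, y t = dissEmbed r (g t))
    (ybar : EuclideanSpace ℝ (Fin M)) (hybar : ybar = (n : ℝ)⁻¹ • ∑ t, y t) :
    ‖ybar - dissEmbed r g₀‖ ^ 2 + (n : ℝ)⁻¹ * ∑ t, ‖y t - ybar‖ ^ 2
      ≤ (M : ℝ) / n * ∑ t, dist (g t) g₀ ^ 2 := by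
  have hmean : ybar = sampleMean y := by rw [hybar, sampleMean, Fintype.card_fin]
  have hdecomp := sum_norm_sub_sq_eq_sum_norm_sub_sampleMean_sq_add y (dissEmbed r g₀)
  rw [Fintype.card_fin, ← hmean] at hdecomp
  have hbound : ∑ t, ‖y t - dissEmbed r g₀‖ ^ 2 ≤ M * ∑ t, dist (g t) g₀ ^ 2 := by
    rw [mul_sum]
    gcongr with t
    rw [hy t]
    exact norm_dissEmbed_sub_sq_le r (g t) g₀
  have hn' : (n : ℝ) ≠ 0 := by positivity
  calc ‖ybar - dissEmbed r g₀‖ ^ 2 + (n : ℝ)⁻¹ * ∑ t, ‖y t - ybar‖ ^ 2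
      = (n : ℝ)⁻¹ * ∑ t, ‖y t - dissEmbed r g₀‖ ^ 2 := by
        rw [hdecomp]
        field_simp
        ring
    _ ≤ (n : ℝ)⁻¹ * (M * ∑ t, dist (g t) g₀ ^ 2) := by gcongr
    _ = (M : ℝ) / n * ∑ t, dist (g t) g₀ ^ 2 := by ring
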